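/- If H is a submonoid of ℕ² that is not finitely generated, then the set of slopes of atoms of H, {slope(a) : a ∈ 𝒜(H)}, has at least one limit point in ℝ_{≥0} ∪ {∞}. -/
import Mathlib


open scoped ENNReal

/-- `a` is an atom of the additive submonoid `H` of `ℕ²`. -/
def IsAtomOf (H : AddSubmonoid (Fin 2 → ℕ)) (a : Fin 2 → ℕ) : Prop :=
  a ∈ H ∧ a ≠ 0 ∧ ∀ y ∈ H, ∀ z ∈ H, a = y + z → y = 0 ∨ z = 0

/-- The slope of a vector of `ℕ²`, valued in `[0,∞]` (so slope `(0, t) = ∞` for `t ≠ 0`). -/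
noncomputable def slopeOf (v : Fin 2 → ℕ) : ℝ≥0∞ :=
  (v 1 : ℝ≥0∞) / (v 0 : ℝ≥0∞)

lemma vec_ne_zero_iff (v : Fin 2 → ℕ) : v ≠ 0 ↔ 0 < v 0 + v 1 := by
  constructor
  · intro h
    by_contra hs
    push_neg at hs
    apply h
    have h0 : v 0 = 0 := by omega
    have h1 : v 1 = 0 := by omega
    funext k
    fin_cases k
    · exact h0
    · exact h1
  · intro h hv
    rw [hv] at h
    simp at h

/-- Every element of `H` lies in the closure of the set of atoms. -/
lemma mem_closure_atoms (H : AddSubmonoid (Fin 2 → ℕ)) :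
    ∀ n (x : Fin 2 → ℕ), x 0 + x 1 ≤ n → x ∈ H →
      x ∈ AddSubmonoid.closure {a | IsAtomOf H a} := by
  intro n
  induction n using Nat.strong_induction_on with
  | _ n ih =>
    intro x hxn hxH
    by_cases hx0 : x = 0
    · rw [hx0]; exact zero_mem _
    by_cases hatom : IsAtomOf H x
    · exact AddSubmonoid.subset_closure hatom
    · unfold IsAtomOf at hatom
      push_neg at hatom
      obtain ⟨y, hyH, z, hzH, hxyz, hy0, hz0⟩ := hatom hxH hx0
      have hy : 0 < y 0 + y 1 := (vec_ne_zero_iff y).mp hy0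
      have hz : 0 < z 0 + z 1 := (vec_ne_zero_iff z).mp hz0
      have hx0' : x 0 = y 0 + z 0 := by rw [hxyz]; rfl
      have hx1' : x 1 = y 1 + z 1 := by rw [hxyz]; rfl
      have hn : 0 < n := by omega
      have hy' : y ∈ AddSubmonoid.closure {a | IsAtomOf H a} :=
        ih (n - 1) (by omega) y (by omega) hyH
      have hz' : z ∈ AddSubmonoid.closure {a | IsAtomOf H a} :=
        ih (n - 1) (by omega) z (by omega) hzH
      rw [hxyz]
      exact add_mem hy' hz'

lemma atoms_infinite (H : AddSubmonoid (Fin 2 → ℕ)) (hfg : ¬ H.FG) :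
    {a | IsAtomOf H a}.Infinite := by
  by_contra hinf
  rw [Set.not_infinite] at hinf
  have hfin := hinf
  apply hfg
  rw [AddSubmonoid.fg_iff]
  refine ⟨{a | IsAtomOf H a}, le_antisymm ?_ ?_, hfin⟩
  · rw [AddSubmonoid.closure_le]
    intro a ha
    exact ha.1
  · intro x hx
    exact mem_closure_atoms H (x 0 + x 1) x le_rfl hx

/-- Atoms collinear with a fixed atom `a` form a finite set. -/
lemma atoms_collinear_finite (H : AddSubmonoid (Fin 2 → ℕ)) (a : Fin 2 → ℕ)
    (ha : IsAtomOf H a) (i j : Fin 2) (hcover : ∀ x : Fin 2, x = i ∨ x = j)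
    (hai : 0 < a i) :
    {b | IsAtomOf H b ∧ b j * a i = b i * a j}.Finite := by
  set B := {b | IsAtomOf H b ∧ b j * a i = b i * a j} with hB
  have key : ∀ b ∈ B, ∀ b' ∈ B, b i ≤ b' i → b i % a i = b' i % a i → b = b' := by
    intro b hb b' hb' hle hmod
    have hdvd : a i ∣ b' i - b i := (Nat.modEq_iff_dvd' hle).mp hmod
    obtain ⟨m, hm⟩ := hdvd
    have hbi' : b' i = b i + a i * m := by omega
    have hbj' : b' j = b j + a j * m := by
      have h1 : b' j * a i = (b j + a j * m) * a i := by
        calc b' j * a i = b' i * a j := hb'.2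
          _ = b i * a j + a i * m * a j := by rw [hbi']; ring
          _ = b j * a i + a j * m * a i := by rw [← hb.2]; ring
          _ = (b j + a j * m) * a i := by ring
      exact Nat.eq_of_mul_eq_mul_right hai h1
    rcases Nat.eq_zero_or_pos m with hm0 | hm0
    · funext x
      rcases hcover x with rfl | rfl
      · rw [hbi', hm0]; ring
      · rw [hbj', hm0]; ring
    · exfalso
      have hdecomp : b' = b + m • a := by
        funext x
        rcases hcover x with rfl | rfl
        · simp only [Pi.add_apply, Pi.smul_apply, smul_eq_mul]
          rw [hbi']; ring
        · simp only [Pi.add_apply, Pi.smul_apply, smul_eq_mul]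
          rw [hbj']; ring
      have hma : m • a ∈ H := nsmul_mem ha.1 m
      rcases hb'.1.2.2 b hb.1.1 (m • a) hma hdecomp with h | h
      · exact hb.1.2.1 h
      · have : (m • a) i = m * a i := rfl
        rw [h] at this
        simp only [Pi.zero_apply] at this
        have := this.symm
        have : m * a i ≠ 0 := Nat.mul_ne_zero (by omega) (by omega)
        omega
  have hinj : Set.InjOn (fun b => b i % a i) B := by
    intro b hb b' hb' h
    rcases le_total (b i) (b' i) with hle | hle
    · exact key b hb b' hb' hle h
    · exact (key b' hb' b hb hle h.symm).symm
  have himg : ((fun b => b i % a i) '' B).Finite := by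
    apply Set.Finite.subset (Set.finite_Icc 0 (a i))
    rintro _ ⟨b, _, rfl⟩
    exact ⟨Nat.zero_le _, le_of_lt (Nat.mod_lt _ hai)⟩
  exact Set.Finite.of_finite_image himg hinj

/-- Equal slopes give proportionality. -/
lemma cross_of_slope_eq (a b : Fin 2 → ℕ) (ha : a ≠ 0) (hb : b ≠ 0)
    (h : slopeOf a = slopeOf b) : b 1 * a 0 = b 0 * a 1 := by
  unfold slopeOf at h
  by_cases ha0 : a 0 = 0
  · have hb0 : b 0 = 0 := by
      by_contra hb0
      have ha1 : a 1 ≠ 0 := by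
        intro ha1
        apply ha
        funext k; fin_cases k
        · exact ha0
        · exact ha1
      rw [ha0, Nat.cast_zero, ENNReal.div_zero (Nat.cast_ne_zero.mpr ha1)] at h
      have : ((b 1 : ℝ≥0∞) / (b 0 : ℝ≥0∞)) ≠ ⊤ := by
        exact (ENNReal.div_lt_top (by simp) (Nat.cast_ne_zero.mpr hb0)).ne
      exact this h.symm
    rw [ha0, hb0]; ring
  · have hb0 : b 0 ≠ 0 := by
      intro hb0
      have hb1 : b 1 ≠ 0 := by
        intro hb1
        apply hb
        funext k; fin_cases k
        · exact hb0
        · exact hb1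
      rw [hb0, Nat.cast_zero, ENNReal.div_zero (Nat.cast_ne_zero.mpr hb1)] at h
      have : ((a 1 : ℝ≥0∞) / (a 0 : ℝ≥0∞)) ≠ ⊤ := by
        exact (ENNReal.div_lt_top (by simp) (Nat.cast_ne_zero.mpr ha0)).ne
      exact this h
    rw [ENNReal.div_eq_div_iff (by exact_mod_cast hb0) (by simp)
      (by exact_mod_cast ha0) (by simp)] at h
    have h' : ((b 0 * a 1 : ℕ) : ℝ≥0∞) = ((a 0 * b 1 : ℕ) : ℝ≥0∞) := by
      push_cast
      exact h
    have h2 := Nat.cast_injective (R := ℝ≥0∞) h'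
    rw [mul_comm]
    exact h2.symm

lemma fiber_finite (H : AddSubmonoid (Fin 2 → ℕ)) (s : ℝ≥0∞) :
    {a | IsAtomOf H a ∧ slopeOf a = s}.Finite := by
  rcases Set.eq_empty_or_nonempty {a | IsAtomOf H a ∧ slopeOf a = s} with he | ⟨a, ha, has⟩
  · rw [he]; exact Set.finite_empty
  by_cases ha0 : a 0 = 0
  · have ha1 : a 1 ≠ 0 := by
      intro ha1
      apply ha.2.1
      funext k; fin_cases k
      · exact ha0
      · exact ha1
    apply Set.Finite.subset (atoms_collinear_finite H a ha 1 0
      (by intro x; fin_cases x <;> simp) (Nat.pos_of_ne_zero ha1))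
    rintro b ⟨hb, hbs⟩
    refine ⟨hb, ?_⟩
    exact (cross_of_slope_eq a b ha.2.1 hb.2.1 (has.trans hbs.symm)).symm
  · apply Set.Finite.subset (atoms_collinear_finite H a ha 0 1
      (by intro x; fin_cases x <;> simp) (Nat.pos_of_ne_zero ha0))
    rintro b ⟨hb, hbs⟩
    exact ⟨hb, cross_of_slope_eq a b ha.2.1 hb.2.1 (has.trans hbs.symm)⟩

/-- If a submonoid of `ℕ²` is not finitely generated, then the set of slopes of its atoms
has a limit point in `ℝ_{≥0} ∪ {∞}`. -/
theorem stmt15 (H : AddSubmonoid (Fin 2 → ℕ)) (hfg : ¬ H.FG) :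
    ∃ L : ℝ≥0∞, AccPt L (Filter.principal {s | ∃ a, IsAtomOf H a ∧ slopeOf a = s}) := by
  set S := {s | ∃ a, IsAtomOf H a ∧ slopeOf a = s} with hS
  have hSinf : S.Infinite := by
    intro hSfin
    apply (atoms_infinite H hfg)
    have hsub : {a | IsAtomOf H a} ⊆ ⋃ s ∈ S, {a | IsAtomOf H a ∧ slopeOf a = s} := by
      intro a ha
      exact Set.mem_biUnion ⟨a, ha, rfl⟩ ⟨ha, rfl⟩
    exact Set.Finite.subset (Set.Finite.biUnion hSfin (fun s _ => fiber_finite H s)) hsub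
  exact hSinf.exists_accPt_principal
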